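/- arXiv:1405.5849 — 2 statements merged into one kernel-verified Lean document; each statement's English description precedes it below -/
import Mathlib

section
/- For every m-linear form T : (ℓ_∞^n)^m → ℝ, (Σ_{j₁=1}^n (Σ_{j₂,…,j_m=1}^n |T(e_{j₁},…,e_{j_m})|²)^{1/2})¹ ≤ (√2)^{m−1} ‖T‖; that is, the constant associated to the multiple exponent (1,2,…,2) is at most (√2)^{m−1} for real scalars. -/
/-- Combine a value for the i-th index with values for the remaining indices
into a full multi-index. -/
def comb {m n : ℕ} (i : Fin m) (ji : Fin n)
    (g : {l : Fin m // l ≠ i} → Fin n) : Fin m → Fin n :=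
  fun l => if h : l = i then ji else g ⟨l, h⟩

open Finset

set_option linter.unusedSectionVars false
set_option linter.unusedTactic false
set_option linter.unusedVariables false


noncomputable def sgn (b : Bool) : ℝ := if b then 1 else -1

lemma sgn_mul_self (b : Bool) : sgn b * sgn b = 1 := by cases b <;> simp [sgn]

lemma abs_sgn (b : Bool) : |sgn b| = 1 := by cases b <;> simp [sgn]

lemma sgn_not (b : Bool) : sgn (!b) = - sgn b := by cases b <;> simp [sgn]

lemma sgn_mul_ne (b b' : Bool) (h : b ≠ b') : sgn b * sgn b' = -1 := by
  cases b <;> cases b' <;> simp_all [sgn]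

variable {ι : Type*} [Fintype ι] [DecidableEq ι]

noncomputable def wS (S : Finset ι) (σ : ι → Bool) : ℝ := ∏ i ∈ S, sgn (σ i)

lemma sum_wS_mul (σ τ : ι → Bool) :
    ∑ S : Finset ι, wS S σ * wS S τ =
      if σ = τ then (2:ℝ) ^ (Fintype.card ι) else 0 := by
  have h1 : ∀ S : Finset ι, wS S σ * wS S τ = ∏ i ∈ S, (sgn (σ i) * sgn (τ i)) := by
    intro S; rw [wS, wS, ← Finset.prod_mul_distrib]
  have h2 : ∑ S : Finset ι, wS S σ * wS S τ
      = ∏ i : ι, (sgn (σ i) * sgn (τ i) + 1) := by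
    rw [Finset.prod_add]
    rw [← Finset.powerset_univ]
    refine Finset.sum_congr rfl fun S _ => ?_
    rw [h1 S, Finset.prod_const_one, mul_one]
  rw [h2]
  by_cases h : σ = τ
  · subst h
    rw [if_pos rfl]
    have : ∀ i : ι, sgn (σ i) * sgn (σ i) + 1 = 2 := fun i => by rw [sgn_mul_self]; norm_num
    simp only [this, Finset.prod_const, Finset.card_univ]
  · simp only [if_neg h]
    obtain ⟨i, hi⟩ : ∃ i, σ i ≠ τ i := by
      by_contra hc; push_neg at hc; exact h (funext hc)
    exact Finset.prod_eq_zero (Finset.mem_univ i) (by rw [sgn_mul_ne _ _ hi]; ring)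

lemma wS_flip (S : Finset ι) (σ : ι → Bool) (i : ι) :
    wS S (Function.update σ i (!(σ i))) = (if i ∈ S then (-1:ℝ) else 1) * wS S σ := by
  have h : ∀ j ∈ S, sgn (Function.update σ i (!(σ i)) j)
      = (if j = i then (-1:ℝ) else 1) * sgn (σ j) := by
    intro j _
    by_cases hj : j = i
    · subst hj; simp [Function.update_self, sgn_not]
    · simp [Function.update_of_ne hj, hj]
  rw [wS, Finset.prod_congr rfl h, Finset.prod_mul_distrib, ← wS]
  congr 1
  by_cases hi : i ∈ S
  · rw [if_pos hi, Finset.prod_eq_prod_diff_singleton_mul hi]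
    rw [if_pos rfl, Finset.prod_congr rfl (fun x hx => if_neg (by
      intro hxi; subst hxi; exact (Finset.mem_sdiff.mp hx).2 (Finset.mem_singleton_self x)))]
    simp
  · rw [if_neg hi, Finset.prod_congr rfl (fun x hx => if_neg (by
      intro hxi; subst hxi; exact hi hx))]
    simp

lemma core_ineq (f : (ι → Bool) → ℝ) (hf0 : ∀ σ, 0 ≤ f σ)
    (heven : ∀ σ, f (fun i => !(σ i)) = f σ)
    (htri : ∀ σ, ((Fintype.card ι : ℝ) - 2) * f σ
      ≤ ∑ i : ι, f (Function.update σ i (!(σ i)))) :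
    (2:ℝ) ^ (Fintype.card ι) * ∑ σ : ι → Bool, (f σ)^2 ≤ 2 * (∑ σ : ι → Bool, f σ)^2 := by
  classical
  set N : ℝ := (2:ℝ) ^ (Fintype.card ι) with hN
  set c : Finset ι → ℝ := fun S => ∑ σ : ι → Bool, f σ * wS S σ with hc
  -- Parseval
  have parseval : ∑ S : Finset ι, (c S)^2 = N * ∑ σ : ι → Bool, (f σ)^2 := by
    have : ∀ S : Finset ι, (c S)^2
        = ∑ σ : ι → Bool, ∑ τ : ι → Bool, (f σ * f τ) * (wS S σ * wS S τ) := by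
      intro S
      rw [hc, sq, Finset.sum_mul_sum]
      exact Finset.sum_congr rfl fun σ _ => Finset.sum_congr rfl fun τ _ => by ring
    rw [Finset.sum_congr rfl fun S _ => this S, Finset.sum_comm]
    rw [Finset.sum_congr rfl fun σ _ => Finset.sum_comm]
    have h2 : ∀ σ τ : ι → Bool, ∑ S : Finset ι, (f σ * f τ) * (wS S σ * wS S τ)
        = (f σ * f τ) * if σ = τ then N else 0 := by
      intro σ τ; rw [← Finset.mul_sum, sum_wS_mul]
    calc ∑ σ : ι → Bool, ∑ τ : ι → Bool, ∑ S : Finset ι, (f σ * f τ) * (wS S σ * wS S τ)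
        = ∑ σ : ι → Bool, ∑ τ : ι → Bool, (f σ * f τ) * if σ = τ then N else 0 := by
          exact Finset.sum_congr rfl fun σ _ => Finset.sum_congr rfl fun τ _ => h2 σ τ
      _ = ∑ σ : ι → Bool, (f σ)^2 * N := by
          refine Finset.sum_congr rfl fun σ _ => ?_
          rw [Finset.sum_eq_single σ]
          · simp [sq]
          · intro τ _ hτ; rw [if_neg (Ne.symm hτ), mul_zero]
          · intro h; exact absurd (Finset.mem_univ σ) h
      _ = N * ∑ σ : ι → Bool, (f σ)^2 := by rw [← Finset.sum_mul]; ring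
  -- inversion
  have inv : ∀ σ : ι → Bool, ∑ S : Finset ι, c S * wS S σ = N * f σ := by
    intro σ
    have : ∀ S : Finset ι, c S * wS S σ = ∑ τ : ι → Bool, f τ * (wS S τ * wS S σ) := by
      intro S; rw [hc, Finset.sum_mul]
      exact Finset.sum_congr rfl fun τ _ => by ring
    rw [Finset.sum_congr rfl fun S _ => this S, Finset.sum_comm]
    have h2 : ∀ τ : ι → Bool, ∑ S : Finset ι, f τ * (wS S τ * wS S σ)
        = f τ * if τ = σ then N else 0 := by
      intro τ; rw [← Finset.mul_sum, sum_wS_mul]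
    rw [Finset.sum_congr rfl fun τ _ => h2 τ, Finset.sum_eq_single σ]
    · rw [if_pos rfl]; ring
    · intro τ _ hτ; rw [if_neg hτ, mul_zero]
    · intro h; exact absurd (Finset.mem_univ σ) h
  -- singletons vanish
  have singles : ∀ i : ι, c {i} = 0 := by
    intro i
    have hkey : c {i} = - c {i} := by
      have hbij : Function.Bijective (fun σ : ι → Bool => fun j => !(σ j)) :=
        Function.Involutive.bijective (fun σ => by funext j; simp)
      calc c {i} = ∑ σ : ι → Bool, f (fun j => !(σ j)) * wS {i} (fun j => !(σ j)) :=
            (Fintype.sum_bijective _ hbij _ _ (fun σ => rfl)).symm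
        _ = ∑ σ : ι → Bool, -(f σ * wS {i} σ) := by
            refine Finset.sum_congr rfl fun σ _ => ?_
            rw [heven σ, wS, wS, Finset.prod_singleton, Finset.prod_singleton, sgn_not]
            ring
        _ = - c {i} := by rw [Finset.sum_neg_distrib]
    linarith
  -- flip quadratic identity
  have flipquad : ∀ i : ι, N * ∑ σ : ι → Bool, f σ * f (Function.update σ i (!(σ i)))
      = ∑ S : Finset ι, (if i ∈ S then (-1:ℝ) else 1) * (c S)^2 := by
    intro i
    calc N * ∑ σ : ι → Bool, f σ * f (Function.update σ i (!(σ i)))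
        = ∑ σ : ι → Bool, f σ * (N * f (Function.update σ i (!(σ i)))) := by
          rw [Finset.mul_sum]; exact Finset.sum_congr rfl fun σ _ => by ring
      _ = ∑ σ : ι → Bool, f σ * ∑ S : Finset ι, c S * wS S (Function.update σ i (!(σ i))) := by
          exact Finset.sum_congr rfl fun σ _ => by rw [inv]
      _ = ∑ σ : ι → Bool, ∑ S : Finset ι,
            (if i ∈ S then (-1:ℝ) else 1) * (c S * (f σ * wS S σ)) := by
          refine Finset.sum_congr rfl fun σ _ => ?_
          rw [Finset.mul_sum]
          refine Finset.sum_congr rfl fun S _ => ?_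
          rw [wS_flip]; ring
      _ = ∑ S : Finset ι, (if i ∈ S then (-1:ℝ) else 1) * (c S)^2 := by
          rw [Finset.sum_comm]
          refine Finset.sum_congr rfl fun S _ => ?_
          rw [← Finset.mul_sum, ← Finset.mul_sum]
          have : ∑ σ : ι → Bool, f σ * wS S σ = c S := rfl
          rw [this]; ring
  -- the spectral inequality : 0 ≤ Σ (2 - 2|S|) c S ^2
  have hNpos : (0:ℝ) < N := by positivity
  have spectral : (0:ℝ) ≤ ∑ S : Finset ι, (2 - 2 * (S.card : ℝ)) * (c S)^2 := by
    have h1 : ((Fintype.card ι : ℝ) - 2) * ∑ σ : ι → Bool, (f σ)^2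
        ≤ ∑ i : ι, ∑ σ : ι → Bool, f σ * f (Function.update σ i (!(σ i))) := by
      rw [Finset.sum_comm, Finset.mul_sum]
      refine Finset.sum_le_sum fun σ _ => ?_
      calc ((Fintype.card ι : ℝ) - 2) * (f σ)^2
          = (((Fintype.card ι : ℝ) - 2) * f σ) * f σ := by ring
        _ ≤ (∑ i : ι, f (Function.update σ i (!(σ i)))) * f σ :=
            mul_le_mul_of_nonneg_right (htri σ) (hf0 σ)
        _ = ∑ i : ι, f σ * f (Function.update σ i (!(σ i))) := by
            rw [Finset.sum_mul]; exact Finset.sum_congr rfl fun i _ => by ring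
    have h2 : N * ∑ i : ι, ∑ σ : ι → Bool, f σ * f (Function.update σ i (!(σ i)))
        = ∑ S : Finset ι, ((Fintype.card ι : ℝ) - 2 * S.card) * (c S)^2 := by
      rw [Finset.mul_sum, Finset.sum_congr rfl fun i _ => flipquad i, Finset.sum_comm]
      refine Finset.sum_congr rfl fun S _ => ?_
      rw [← Finset.sum_mul]
      congr 1
      have : ∑ i : ι, (if i ∈ S then (-1:ℝ) else 1)
          = ∑ i : ι, (1 - 2 * (if i ∈ S then (1:ℝ) else 0)) := by
        refine Finset.sum_congr rfl fun i _ => by split <;> norm_num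
      rw [this, Finset.sum_sub_distrib, Finset.sum_const, ← Finset.mul_sum,
        Finset.sum_ite_mem, Finset.univ_inter, Finset.sum_const, Finset.card_univ]
      push_cast
      ring
    have h3 : ((Fintype.card ι : ℝ) - 2) * ∑ S : Finset ι, (c S)^2
        ≤ ∑ S : Finset ι, ((Fintype.card ι : ℝ) - 2 * S.card) * (c S)^2 := by
      rw [parseval, ← h2]
      calc ((Fintype.card ι : ℝ) - 2) * (N * ∑ σ : ι → Bool, (f σ)^2)
          = N * (((Fintype.card ι : ℝ) - 2) * ∑ σ : ι → Bool, (f σ)^2) := by ring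
        _ ≤ N * ∑ i : ι, ∑ σ : ι → Bool, f σ * f (Function.update σ i (!(σ i))) :=
            mul_le_mul_of_nonneg_left h1 (le_of_lt hNpos)
    have h4 : ∑ S : Finset ι, ((Fintype.card ι : ℝ) - 2 * S.card) * (c S)^2
        - ((Fintype.card ι : ℝ) - 2) * ∑ S : Finset ι, (c S)^2
        = ∑ S : Finset ι, (2 - 2 * (S.card : ℝ)) * (c S)^2 := by
      rw [Finset.mul_sum, ← Finset.sum_sub_distrib]
      exact Finset.sum_congr rfl fun S _ => by ring
    linarith
  -- conclude : Σ c S ^2 ≤ 2 c ∅ ^2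
  have conclude : ∑ S : Finset ι, (c S)^2 ≤ 2 * (c ∅)^2 := by
    have hsplit := Finset.sum_filter_add_sum_filter_not Finset.univ
      (fun S : Finset ι => S.card ≤ 1) (fun S => (c S)^2)
    have hsplit2 := Finset.sum_filter_add_sum_filter_not Finset.univ
      (fun S : Finset ι => S.card ≤ 1) (fun S => (2 - 2 * (S.card : ℝ)) * (c S)^2)
    have hlow : ∑ S ∈ Finset.univ.filter (fun S : Finset ι => S.card ≤ 1), (c S)^2
        = (c ∅)^2 := by
      rw [Finset.sum_eq_single_of_mem (∅ : Finset ι)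
        (Finset.mem_filter.mpr ⟨Finset.mem_univ _, by simp⟩)]
      intro S hSmem hS
      obtain ⟨i, rfl⟩ : ∃ i, S = {i} := by
        refine Finset.card_eq_one.mp (le_antisymm (Finset.mem_filter.mp hSmem).2 ?_)
        exact Finset.card_pos.mpr (Finset.nonempty_iff_ne_empty.mpr hS)
      rw [singles i]; ring
    have hlow2 : ∑ S ∈ Finset.univ.filter (fun S : Finset ι => S.card ≤ 1),
        (2 - 2 * (S.card : ℝ)) * (c S)^2 ≤ 2 * (c ∅)^2 := by
      rw [Finset.sum_eq_single_of_mem (∅ : Finset ι)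
        (Finset.mem_filter.mpr ⟨Finset.mem_univ _, by simp⟩)]
      · simp
      intro S hSmem hS
      obtain ⟨i, rfl⟩ : ∃ i, S = {i} := by
        refine Finset.card_eq_one.mp (le_antisymm (Finset.mem_filter.mp hSmem).2 ?_)
        exact Finset.card_pos.mpr (Finset.nonempty_iff_ne_empty.mpr hS)
      rw [singles i]; ring
    have hhigh : ∑ S ∈ Finset.univ.filter (fun S : Finset ι => ¬ S.card ≤ 1), (c S)^2
        ≤ ∑ S ∈ Finset.univ.filter (fun S : Finset ι => ¬ S.card ≤ 1),
            -((2 - 2 * (S.card : ℝ)) * (c S)^2) / 2 := by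
      refine Finset.sum_le_sum fun S hS => ?_
      have h2le : 2 ≤ S.card := by
        have := (Finset.mem_filter.mp hS).2; omega
      have : (1:ℝ) ≤ (S.card : ℝ) - 1 := by
        have : (2:ℝ) ≤ (S.card : ℝ) := by exact_mod_cast h2le
        linarith
      nlinarith [sq_nonneg (c S)]
    have hbudget : ∑ S ∈ Finset.univ.filter (fun S : Finset ι => ¬ S.card ≤ 1),
        -((2 - 2 * (S.card : ℝ)) * (c S)^2) / 2 ≤ (c ∅)^2 := by
      have : ∑ S ∈ Finset.univ.filter (fun S : Finset ι => ¬ S.card ≤ 1),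
          (2 - 2 * (S.card : ℝ)) * (c S)^2 ≥ -(2 * (c ∅)^2) := by
        have := hsplit2
        nlinarith [hlow2, spectral]
      have heq : ∑ S ∈ Finset.univ.filter (fun S : Finset ι => ¬ S.card ≤ 1),
          -((2 - 2 * (S.card : ℝ)) * (c S)^2) / 2
          = -(∑ S ∈ Finset.univ.filter (fun S : Finset ι => ¬ S.card ≤ 1),
              (2 - 2 * (S.card : ℝ)) * (c S)^2) / 2 := by
        rw [← Finset.sum_neg_distrib, ← Finset.sum_div]
      rw [heq]; linarith
    calc ∑ S : Finset ι, (c S)^2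
        = (c ∅)^2 + ∑ S ∈ Finset.univ.filter (fun S : Finset ι => ¬ S.card ≤ 1), (c S)^2 := by
          rw [← hsplit, hlow]
      _ ≤ (c ∅)^2 + (c ∅)^2 := by
          have := le_trans hhigh hbudget; linarith
      _ = 2 * (c ∅)^2 := by ring
  -- finish: c ∅ = Σ f
  have hempty : c ∅ = ∑ σ : ι → Bool, f σ := by
    rw [hc]
    exact Finset.sum_congr rfl fun σ _ => by rw [wS, Finset.prod_empty, mul_one]
  rw [← hempty]
  calc N * ∑ σ : ι → Bool, (f σ)^2 = ∑ S : Finset ι, (c S)^2 := parseval.symm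
    _ ≤ 2 * (c ∅)^2 := conclude

lemma sum_sq_signsum (a : ι → ℝ) :
    ∑ σ : ι → Bool, (∑ i : ι, sgn (σ i) * a i)^2
      = (2:ℝ) ^ (Fintype.card ι) * ∑ i : ι, (a i)^2 := by
  classical
  have expand : ∀ σ : ι → Bool, (∑ i : ι, sgn (σ i) * a i)^2
      = ∑ i : ι, ∑ j : ι, (a i * a j) * (sgn (σ i) * sgn (σ j)) := by
    intro σ
    rw [sq, Finset.sum_mul_sum]
    exact Finset.sum_congr rfl fun i _ => Finset.sum_congr rfl fun j _ => by ring
  rw [Finset.sum_congr rfl fun σ _ => expand σ]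
  rw [Finset.sum_comm]
  have swap2 : ∀ i : ι, ∑ σ : ι → Bool, ∑ j : ι, (a i * a j) * (sgn (σ i) * sgn (σ j))
      = ∑ j : ι, ∑ σ : ι → Bool, (a i * a j) * (sgn (σ i) * sgn (σ j)) := fun i =>
    Finset.sum_comm
  rw [Finset.sum_congr rfl fun i _ => swap2 i]
  have key : ∀ i j : ι, ∑ σ : ι → Bool, (sgn (σ i) * sgn (σ j))
      = if i = j then (2:ℝ)^(Fintype.card ι) else 0 := by
    intro i j
    by_cases hij : i = j
    · subst hij
      rw [if_pos rfl]
      have : ∀ σ : ι → Bool, sgn (σ i) * sgn (σ i) = 1 := fun σ => sgn_mul_self _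
      rw [Finset.sum_congr rfl fun σ _ => this σ, Finset.sum_const, Finset.card_univ]
      simp [Fintype.card_fun]
    · rw [if_neg hij]
      have hw : ∀ σ : ι → Bool, sgn (σ i) * sgn (σ j) = wS {i, j} σ := by
        intro σ
        rw [wS, Finset.prod_insert (by simp [hij]), Finset.prod_singleton]
      rw [Finset.sum_congr rfl fun σ _ => hw σ]
      -- sum of a nonempty Walsh function is zero
      have hbij : Function.Bijective
          (fun σ : ι → Bool => Function.update σ i (!(σ i))) := by
        constructor
        · intro σ τ h
          funext k
          by_cases hk : k = i
          · subst hk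
            have := congrFun h k
            simp only [Function.update_self] at this
            exact Bool.not_inj this
          · have := congrFun h k
            simpa [Function.update_of_ne hk] using this
        · intro σ
          refine ⟨Function.update σ i (!(σ i)), ?_⟩
          funext k
          by_cases hk : k = i
          · subst hk; simp
          · simp [Function.update_of_ne hk]
      have := Fintype.sum_bijective _ hbij (fun σ => wS {i,j} σ) (fun σ => - wS {i,j} σ)
        (fun σ => by
          show wS {i,j} σ = - wS {i,j} (Function.update σ i (!(σ i)))
          rw [wS_flip]
          have : i ∈ ({i, j} : Finset ι) := by simp
          rw [if_pos this]; ring)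
      have h2 : ∑ σ : ι → Bool, wS {i,j} σ = - ∑ σ : ι → Bool, wS {i,j} σ := by
        rw [← Finset.sum_neg_distrib]; exact this
      linarith
  have inner : ∀ i j : ι, ∑ σ : ι → Bool, (a i * a j) * (sgn (σ i) * sgn (σ j))
      = (a i * a j) * if i = j then (2:ℝ)^(Fintype.card ι) else 0 := by
    intro i j; rw [← Finset.mul_sum, key]
  rw [Finset.sum_congr rfl fun i _ => Finset.sum_congr rfl fun j _ => inner i j]
  rw [Finset.mul_sum]
  refine Finset.sum_congr rfl fun i _ => ?_
  rw [Finset.sum_eq_single i]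
  · rw [if_pos rfl]; ring
  · intro j _ hj; rw [if_neg (Ne.symm hj), mul_zero]
  · intro h; exact absurd (Finset.mem_univ i) h

/-- Sharp one-dimensional L¹ Khinchin inequality (Szarek's inequality),
via the Latała–Oleszkiewicz spectral argument. -/
lemma khinchin_sharp (a : ι → ℝ) :
    Real.sqrt (∑ i : ι, (a i)^2) * (2:ℝ) ^ (Fintype.card ι)
      ≤ Real.sqrt 2 * ∑ σ : ι → Bool, |∑ i : ι, sgn (σ i) * a i| := by
  classical
  set f : (ι → Bool) → ℝ := fun σ => |∑ i : ι, sgn (σ i) * a i| with hf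
  have hf0 : ∀ σ, 0 ≤ f σ := fun σ => abs_nonneg _
  have heven : ∀ σ, f (fun i => !(σ i)) = f σ := by
    intro σ
    rw [hf]
    simp only
    rw [← abs_neg (∑ i : ι, sgn ((fun i => !(σ i)) i) * a i)]
    congr 1
    rw [← Finset.sum_neg_distrib]
    exact Finset.sum_congr rfl fun i _ => by rw [sgn_not]; ring
  have htri : ∀ σ, ((Fintype.card ι : ℝ) - 2) * f σ
      ≤ ∑ i : ι, f (Function.update σ i (!(σ i))) := by
    intro σ
    have hsum : ∑ i : ι, (∑ j : ι, sgn ((Function.update σ i (!(σ i))) j) * a j)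
        = ((Fintype.card ι : ℝ) - 2) * ∑ j : ι, sgn (σ j) * a j := by
      have hone : ∀ i : ι, ∑ j : ι, sgn ((Function.update σ i (!(σ i))) j) * a j
          = (∑ j : ι, sgn (σ j) * a j) - 2 * (sgn (σ i) * a i) := by
        intro i
        have : ∀ j : ι, sgn ((Function.update σ i (!(σ i))) j) * a j
            = sgn (σ j) * a j - (if j = i then 2 * (sgn (σ i) * a i) else 0) := by
          intro j
          by_cases hj : j = i
          · subst hj; rw [Function.update_self, sgn_not, if_pos rfl]; ring
          · rw [Function.update_of_ne hj, if_neg hj]; ring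
        rw [Finset.sum_congr rfl fun j _ => this j, Finset.sum_sub_distrib]
        congr 1
        rw [Finset.sum_ite_eq' Finset.univ i (fun _ => 2 * (sgn (σ i) * a i))]
        simp
      rw [Finset.sum_congr rfl fun i _ => hone i, Finset.sum_sub_distrib,
        Finset.sum_const, Finset.card_univ, ← Finset.mul_sum, nsmul_eq_mul]
      ring
    calc ((Fintype.card ι : ℝ) - 2) * f σ
        ≤ |((Fintype.card ι : ℝ) - 2) * ∑ j : ι, sgn (σ j) * a j| := by
          rw [abs_mul]
          exact mul_le_mul_of_nonneg_right (le_abs_self _) (hf0 σ)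
      _ = |∑ i : ι, (∑ j : ι, sgn ((Function.update σ i (!(σ i))) j) * a j)| := by
          rw [hsum]
      _ ≤ ∑ i : ι, f (Function.update σ i (!(σ i))) :=
          Finset.abs_sum_le_sum_abs _ _
  have core := core_ineq f hf0 heven htri
  have hsq : ∑ σ : ι → Bool, (f σ)^2
      = (2:ℝ) ^ (Fintype.card ι) * ∑ i : ι, (a i)^2 := by
    rw [← sum_sq_signsum a]
    exact Finset.sum_congr rfl fun σ _ => by rw [hf, sq_abs]
  -- now conclude by taking square roots
  set A := ∑ i : ι, (a i)^2 with hA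
  set N : ℝ := (2:ℝ) ^ (Fintype.card ι) with hN
  have hNpos : (0:ℝ) < N := by positivity
  have hApos : (0:ℝ) ≤ A := Finset.sum_nonneg fun i _ => sq_nonneg _
  have hFpos : (0:ℝ) ≤ ∑ σ : ι → Bool, f σ := Finset.sum_nonneg fun σ _ => hf0 σ
  have hmain : N * (N * A) ≤ 2 * (∑ σ : ι → Bool, f σ)^2 := by
    rw [← hsq]; exact core
  have h1 : Real.sqrt A * N = Real.sqrt (N * (N * A)) := by
    rw [show N * (N * A) = A * N^2 by ring, Real.sqrt_mul hApos,
      Real.sqrt_sq (le_of_lt hNpos)]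
  have h2 : Real.sqrt (2 * (∑ σ : ι → Bool, f σ)^2)
      = Real.sqrt 2 * ∑ σ : ι → Bool, f σ := by
    rw [Real.sqrt_mul (by norm_num), Real.sqrt_sq hFpos]
  rw [h1, ← h2]
  exact Real.sqrt_le_sqrt hmain
lemma minkowski_abs {α κ : Type*} [Fintype α] [Fintype κ] (v : α → κ → ℝ) :
    Real.sqrt (∑ j : κ, (∑ x : α, |v x j|)^2) ≤ ∑ x : α, Real.sqrt (∑ j : κ, (v x j)^2) := by
  classical
  set u : α → EuclideanSpace ℝ κ := fun x => WithLp.toLp 2 (fun j => |v x j|) with hu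
  have hnorm : ∀ x, ‖u x‖ = Real.sqrt (∑ j : κ, (v x j)^2) := by
    intro x
    rw [EuclideanSpace.norm_eq]
    congr 1
    exact Finset.sum_congr rfl fun j _ => by
      rw [Real.norm_eq_abs, abs_abs, sq_abs]
  have hsum : ‖∑ x : α, u x‖ = Real.sqrt (∑ j : κ, (∑ x : α, |v x j|)^2) := by
    rw [EuclideanSpace.norm_eq]
    congr 1
    refine Finset.sum_congr rfl fun j _ => ?_
    have happ : (∑ x : α, u x) j = ∑ x : α, |v x j| := by
      rw [WithLp.ofLp_sum, Finset.sum_apply]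
    rw [happ, Real.norm_eq_abs, abs_of_nonneg (Finset.sum_nonneg fun x _ => abs_nonneg _)]
  calc Real.sqrt (∑ j : κ, (∑ x : α, |v x j|)^2) = ‖∑ x : α, u x‖ := hsum.symm
    _ ≤ ∑ x : α, ‖u x‖ := norm_sum_le _ _
    _ = ∑ x : α, Real.sqrt (∑ j : κ, (v x j)^2) :=
        Finset.sum_congr rfl fun x _ => hnorm x

lemma sqrt_sum_sq_mono {κ : Type*} [Fintype κ] (x y : κ → ℝ)
    (h0 : ∀ j, 0 ≤ x j) (h : ∀ j, x j ≤ y j) :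
    Real.sqrt (∑ j : κ, (x j)^2) ≤ Real.sqrt (∑ j : κ, (y j)^2) :=
  Real.sqrt_le_sqrt (Finset.sum_le_sum fun j _ => pow_le_pow_left₀ (h0 j) (h j) 2)

/-- Multilinear sharp Khinchin inequality over `Fin d` directions. -/
lemma multi_khinchin (n : ℕ) : ∀ (d : ℕ) (a : (Fin d → Fin n) → ℝ),
    Real.sqrt (∑ g : Fin d → Fin n, (a g)^2) * ((2:ℝ)^n)^d
      ≤ (Real.sqrt 2)^d * ∑ σ : Fin d → (Fin n → Bool),
          |∑ g : Fin d → Fin n, (∏ l : Fin d, sgn (σ l (g l))) * a g| := by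
  intro d
  induction d with
  | zero =>
    intro a
    simp only [pow_zero, one_mul, mul_one]
    rw [Fintype.sum_unique, Fintype.sum_unique, Fintype.sum_unique]
    simp only [Finset.univ_eq_empty, Finset.prod_empty, one_mul]
    rw [Real.sqrt_sq_eq_abs]
  | succ d IH =>
    intro a
    classical
    set K : ℝ := (2:ℝ)^n with hK
    set s : ℝ := Real.sqrt 2 with hs
    have hK0 : (0:ℝ) < K := by positivity
    have hs0 : (0:ℝ) ≤ s := Real.sqrt_nonneg 2
    set b : Fin n → (Fin d → Fin n → Bool) → ℝ := fun j σ' =>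
      ∑ g' : Fin d → Fin n, (∏ l : Fin d, sgn (σ' l (g' l))) * a (Fin.cons j g') with hb
    -- expansion of the inner sum
    have hexp : ∀ (σ₀ : Fin n → Bool) (σ' : Fin d → Fin n → Bool),
        ∑ g : Fin (d+1) → Fin n,
            (∏ l : Fin (d+1), sgn ((Fin.cons σ₀ σ' : Fin (d+1) → Fin n → Bool) l (g l))) * a g
          = ∑ j : Fin n, sgn (σ₀ j) * b j σ' := by
      intro σ₀ σ'
      rw [← Fintype.sum_equiv (Fin.consEquiv (fun _ : Fin (d+1) => Fin n))
        (fun p => (∏ l : Fin (d+1),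
          sgn ((Fin.cons σ₀ σ' : Fin (d+1) → Fin n → Bool) l
            ((Fin.consEquiv (fun _ : Fin (d+1) => Fin n)) p l))) * a
              ((Fin.consEquiv (fun _ : Fin (d+1) => Fin n)) p))
        (fun g => (∏ l : Fin (d+1),
          sgn ((Fin.cons σ₀ σ' : Fin (d+1) → Fin n → Bool) l (g l))) * a g)
        (fun p => rfl)]
      rw [Fintype.sum_prod_type]
      refine Finset.sum_congr rfl fun j _ => ?_
      rw [hb]
      simp only
      rw [Finset.mul_sum]
      refine Finset.sum_congr rfl fun g' _ => ?_
      have hcons : (Fin.consEquiv (fun _ : Fin (d+1) => Fin n)) (j, g') = Fin.cons j g' := rfl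
      rw [hcons]
      rw [Fin.prod_univ_succ]
      simp only [Fin.cons_zero, Fin.cons_succ]
      ring
    -- step 1 : rewrite the big sum over σ
    have step1 : ∑ σ : Fin (d+1) → (Fin n → Bool),
        |∑ g : Fin (d+1) → Fin n, (∏ l : Fin (d+1), sgn (σ l (g l))) * a g|
        = ∑ σ' : Fin d → (Fin n → Bool), ∑ σ₀ : Fin n → Bool,
            |∑ j : Fin n, sgn (σ₀ j) * b j σ'| := by
      rw [← Fintype.sum_equiv (Fin.consEquiv (fun _ : Fin (d+1) => Fin n → Bool))
        (fun p => |∑ g : Fin (d+1) → Fin n, (∏ l : Fin (d+1),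
          sgn (((Fin.consEquiv (fun _ : Fin (d+1) => Fin n → Bool)) p) l (g l))) * a g|)
        (fun σ => |∑ g : Fin (d+1) → Fin n, (∏ l : Fin (d+1), sgn (σ l (g l))) * a g|)
        (fun p => rfl)]
      rw [Fintype.sum_prod_type]
      rw [Finset.sum_comm]
      refine Finset.sum_congr rfl fun σ' _ => Finset.sum_congr rfl fun σ₀ _ => ?_
      have hcons : (Fin.consEquiv (fun _ : Fin (d+1) => Fin n → Bool)) (σ₀, σ')
          = Fin.cons σ₀ σ' := rfl
      rw [hcons, hexp σ₀ σ']
    -- abbreviations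
    set C : Fin n → ℝ := fun j => ∑ g' : Fin d → Fin n, (a (Fin.cons j g'))^2 with hC
    set D : Fin n → ℝ := fun j => ∑ σ' : Fin d → Fin n → Bool, |b j σ'| with hD
    have hC0 : ∀ j, 0 ≤ C j := fun j => Finset.sum_nonneg fun g' _ => sq_nonneg _
    have hA : ∑ g : Fin (d+1) → Fin n, (a g)^2 = ∑ j : Fin n, C j := by
      rw [← Fintype.sum_equiv (Fin.consEquiv (fun _ : Fin (d+1) => Fin n))
        (fun p => (a ((Fin.consEquiv (fun _ : Fin (d+1) => Fin n)) p))^2)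
        (fun g => (a g)^2) (fun p => rfl)]
      rw [Fintype.sum_prod_type]
      rfl
    -- step 3 : induction hypothesis, per j
    have step3 : ∀ j : Fin n, Real.sqrt (C j) * K^d ≤ s^d * D j := by
      intro j
      have := IH (fun g' => a (Fin.cons j g'))
      rw [hC, hD]
      exact this
    -- step 2 : one-dimensional Khinchin, per σ'
    have step2 : ∀ σ' : Fin d → Fin n → Bool,
        Real.sqrt (∑ j : Fin n, (b j σ')^2) * K
          ≤ s * ∑ σ₀ : Fin n → Bool, |∑ j : Fin n, sgn (σ₀ j) * b j σ'| := by
      intro σ'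
      have := khinchin_sharp (ι := Fin n) (fun j => b j σ')
      rwa [Fintype.card_fin] at this
    -- assemble
    have h1 : Real.sqrt (∑ j : Fin n, C j) * K^d
        = Real.sqrt (∑ j : Fin n, (Real.sqrt (C j) * K^d)^2) := by
      have : ∀ j : Fin n, (Real.sqrt (C j) * K^d)^2 = C j * (K^d)^2 := by
        intro j
        rw [mul_pow, Real.sq_sqrt (hC0 j)]
      rw [Finset.sum_congr rfl fun j _ => this j, ← Finset.sum_mul,
        Real.sqrt_mul (Finset.sum_nonneg fun j _ => hC0 j),
        Real.sqrt_sq (by positivity)]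
    have h2 : Real.sqrt (∑ j : Fin n, (Real.sqrt (C j) * K^d)^2)
        ≤ Real.sqrt (∑ j : Fin n, (s^d * D j)^2) :=
      sqrt_sum_sq_mono _ _ (fun j => by positivity) step3
    have h3 : Real.sqrt (∑ j : Fin n, (s^d * D j)^2)
        ≤ s^d * ∑ σ' : Fin d → Fin n → Bool,
            Real.sqrt (∑ j : Fin n, (b j σ')^2) := by
      have e1 : ∀ j : Fin n, (s^d * D j)^2 = (s^d)^2 * (D j)^2 := fun j => by ring
      rw [Finset.sum_congr rfl fun j _ => e1 j, ← Finset.mul_sum,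
        Real.sqrt_mul (by positivity), Real.sqrt_sq (by positivity)]
      refine mul_le_mul_of_nonneg_left ?_ (by positivity)
      have := minkowski_abs (fun (σ' : Fin d → Fin n → Bool) (j : Fin n) => b j σ')
      exact this
    have h4 : K * ∑ σ' : Fin d → Fin n → Bool, Real.sqrt (∑ j : Fin n, (b j σ')^2)
        ≤ s * ∑ σ' : Fin d → Fin n → Bool, ∑ σ₀ : Fin n → Bool,
            |∑ j : Fin n, sgn (σ₀ j) * b j σ'| := by
      rw [Finset.mul_sum, Finset.mul_sum]
      exact Finset.sum_le_sum fun σ' _ => by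
        have := step2 σ'
        linarith [step2 σ']
    calc Real.sqrt (∑ g : Fin (d+1) → Fin n, (a g)^2) * K^(d+1)
        = (Real.sqrt (∑ j : Fin n, C j) * K^d) * K := by rw [hA]; ring
      _ = Real.sqrt (∑ j : Fin n, (Real.sqrt (C j) * K^d)^2) * K := by rw [h1]
      _ ≤ Real.sqrt (∑ j : Fin n, (s^d * D j)^2) * K :=
          mul_le_mul_of_nonneg_right h2 (le_of_lt hK0)
      _ ≤ (s^d * ∑ σ' : Fin d → Fin n → Bool,
            Real.sqrt (∑ j : Fin n, (b j σ')^2)) * K :=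
          mul_le_mul_of_nonneg_right h3 (le_of_lt hK0)
      _ = s^d * (K * ∑ σ' : Fin d → Fin n → Bool,
            Real.sqrt (∑ j : Fin n, (b j σ')^2)) := by ring
      _ ≤ s^d * (s * ∑ σ' : Fin d → Fin n → Bool, ∑ σ₀ : Fin n → Bool,
            |∑ j : Fin n, sgn (σ₀ j) * b j σ'|) :=
          mul_le_mul_of_nonneg_left h4 (by positivity)
      _ = s^(d+1) * ∑ σ : Fin (d+1) → (Fin n → Bool),
            |∑ g : Fin (d+1) → Fin n, (∏ l : Fin (d+1), sgn (σ l (g l))) * a g| := by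
          rw [step1]; ring

def precompEquiv {D E X : Type*} (e : D ≃ E) : (D → X) ≃ (E → X) :=
  ⟨fun g => g ∘ e.symm, fun g => g ∘ e,
   fun g => by funext l; simp [Function.comp], fun g => by funext l; simp [Function.comp]⟩

@[simp] lemma precompEquiv_apply {D E X : Type*} (e : D ≃ E) (g : D → X) :
    precompEquiv e g = g ∘ e.symm := rfl

/-- Multilinear sharp Khinchin inequality, general direction type. -/
lemma multi_khinchin_general {D : Type*} [Fintype D] [DecidableEq D] (n d : ℕ)
    (e : D ≃ Fin d) (a : (D → Fin n) → ℝ) :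
    Real.sqrt (∑ g : D → Fin n, (a g)^2) * ((2:ℝ)^n)^d
      ≤ (Real.sqrt 2)^d * ∑ σ : D → (Fin n → Bool),
          |∑ g : D → Fin n, (∏ l : D, sgn (σ l (g l))) * a g| := by
  classical
  have key := multi_khinchin n d (fun g' => a (g' ∘ e))
  have E1 : ∑ g : D → Fin n, (a g)^2 = ∑ g' : Fin d → Fin n, (a (g' ∘ e))^2 := by
    refine Fintype.sum_equiv (precompEquiv e) _ _ fun g => ?_
    rw [precompEquiv_apply]
    have : (g ∘ ⇑e.symm) ∘ ⇑e = g := by funext l; simp [Function.comp]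
    rw [this]
  have E2 : ∑ σ : D → (Fin n → Bool),
        |∑ g : D → Fin n, (∏ l : D, sgn (σ l (g l))) * a g|
      = ∑ σ' : Fin d → (Fin n → Bool),
        |∑ g' : Fin d → Fin n, (∏ l' : Fin d, sgn (σ' l' (g' l'))) * a (g' ∘ e)| := by
    refine Fintype.sum_equiv (precompEquiv e) _ _ fun σ => ?_
    rw [precompEquiv_apply]
    congr 1
    refine Fintype.sum_equiv (precompEquiv e) _ _ fun g => ?_
    rw [precompEquiv_apply]
    have hprod : ∏ l' : Fin d, sgn ((σ ∘ e.symm) l' ((g ∘ e.symm) l'))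
        = ∏ l : D, sgn (σ l (g l)) := by
      refine (Fintype.prod_equiv e _ _ fun l => ?_).symm
      simp [Function.comp]
    rw [hprod]
    have : (g ∘ ⇑e.symm) ∘ ⇑e = g := by funext l; simp [Function.comp]
    rw [this]
  rw [E1, E2]
  exact key

def splitEquiv {m n : ℕ} (i0 : Fin m) : (Fin m → Fin n) ≃ Fin n × ({l : Fin m // l ≠ i0} → Fin n) where
  toFun r := (r i0, fun l => r l.val)
  invFun p := comb i0 p.1 p.2
  left_inv r := by
    funext l
    simp only [comb]
    by_cases h : l = i0
    · subst h; rw [dif_pos rfl]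
    · rw [dif_neg h]
  right_inv p := by
    refine Prod.ext ?_ ?_
    · show comb i0 p.1 p.2 i0 = p.1
      simp only [comb, dif_pos]
    · funext l
      show comb i0 p.1 p.2 l.val = p.2 l
      simp only [comb, dif_neg l.prop]

@[simp] lemma splitEquiv_apply {m n : ℕ} (i0 : Fin m) (r : Fin m → Fin n) :
    splitEquiv i0 r = (r i0, fun l => r l.val) := rfl

lemma main_aux (m n : ℕ) (hm : 2 ≤ m) (hn : 1 ≤ n) (i0 : Fin m)
    (T : MultilinearMap ℝ (fun _ : Fin m => (Fin n → ℝ)) ℝ) (M : ℝ)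
    (hT : ∀ x : Fin m → (Fin n → ℝ),
      (∀ i j, |x i j| ≤ 1) → |T x| ≤ M) :
    ∑ j1 : Fin n,
        (∑ g : {l : Fin m // l ≠ i0} → Fin n,
            (T fun l => Pi.single (comb i0 j1 g l) (1 : ℝ)) ^ 2) ^
          ((1 : ℝ) / 2) ≤
      Real.sqrt 2 ^ ((m : ℝ) - 1) * M := by
  classical
  set G := {l : Fin m // l ≠ i0} with hG
  have cardG : Fintype.card G = m - 1 := by
    have h1 := Fintype.card_subtype_compl (fun l : Fin m => l = i0)
    rw [Fintype.card_subtype_eq, Fintype.card_fin] at h1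
    exact h1
  have e : G ≃ Fin (m-1) := Fintype.equivFinOfCardEq cardG
  set A : Fin n → (G → Fin n) → ℝ :=
    fun j g => T (fun l => Pi.single (comb i0 j g l) (1:ℝ)) with hA
  set X : (G → Fin n → Bool) → Fin n → (Fin m → (Fin n → ℝ)) :=
    fun σ j l => if h : l = i0 then Pi.single j 1 else (fun k => sgn (σ ⟨l, h⟩ k)) with hX
  -- expansion of T at sign vectors
  have hexpT : ∀ (σ : G → Fin n → Bool) (j : Fin n),
      (∑ g : G → Fin n, (∏ l : G, sgn (σ l (g l))) * A j g) = T (X σ j) := by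
    intro σ j
    set Gm : Fin m → Fin n → (Fin n → ℝ) := fun l k =>
      if h : l = i0 then (if k = j then Pi.single j (1:ℝ) else 0)
      else (sgn (σ ⟨l,h⟩ k) • (Pi.single k 1 : Fin n → ℝ)) with hGm
    have hXsum : X σ j = fun l => ∑ k : Fin n, Gm l k := by
      funext l
      by_cases h : l = i0
      · subst h
        simp only [hX, hGm, dif_pos rfl]
        rw [Finset.sum_ite_eq' Finset.univ j (fun _ => (Pi.single j 1 : Fin n → ℝ))]
        simp
      · simp only [hX, hGm, dif_neg h]
        funext k'
        rw [Finset.sum_apply]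
        have : ∀ k : Fin n, (sgn (σ ⟨l,h⟩ k) • (Pi.single k 1 : Fin n → ℝ)) k'
            = if k' = k then sgn (σ ⟨l,h⟩ k) else 0 := by
          intro k
          rw [Pi.smul_apply, Pi.single_apply]
          by_cases hk : k' = k <;> simp [hk]
        rw [Finset.sum_congr rfl fun k _ => this k]
        rw [Finset.sum_ite_eq Finset.univ k' (fun k => sgn (σ ⟨l,h⟩ k))]
        simp
    rw [hXsum, MultilinearMap.map_sum]
    have hterm : ∀ r : Fin m → Fin n,
        T (fun l => Gm l (r l))
          = if r i0 = j then (∏ l : G, sgn (σ l (r l.val))) * A j (fun l => r l.val)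
            else 0 := by
      intro r
      by_cases hr : r i0 = j
      · rw [if_pos hr]
        set c : Fin m → ℝ := fun l =>
          if h : l = i0 then 1 else sgn (σ ⟨l,h⟩ (r l)) with hc
        have hfam : (fun l => Gm l (r l)) = fun l => c l • (Pi.single (r l) 1 : Fin n → ℝ) := by
          funext l
          by_cases h : l = i0
          · subst h
            simp only [hGm, hc, dif_pos rfl, if_pos hr, hr, one_smul, if_true]
          · simp only [hGm, hc, dif_neg h]
        rw [hfam, MultilinearMap.map_smul_univ]
        have hprod : ∏ l : Fin m, c l = ∏ l : G, sgn (σ l (r l.val)) := by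
          rw [← Finset.mul_prod_erase Finset.univ c (Finset.mem_univ i0)]
          have hci0 : c i0 = 1 := by simp [hc]
          rw [hci0, one_mul]
          rw [Finset.prod_subtype (p := fun x => x ≠ i0) (Finset.univ.erase i0)
            (fun x => by simp [Finset.mem_erase]) c]
          refine Finset.prod_congr rfl fun l _ => ?_
          simp only [hc, dif_neg l.prop]
        have hbase : T (fun l => Pi.single (r l) (1:ℝ)) = A j (fun l => r l.val) := by
          rw [hA]
          congr 1
          funext l
          congr 1
          simp only [comb]
          by_cases h : l = i0
          · subst h; rw [dif_pos rfl, hr]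
          · rw [dif_neg h]
        rw [hprod, hbase, smul_eq_mul]
      · rw [if_neg hr]
        refine MultilinearMap.map_coord_zero T i0 ?_
        simp only [hGm, dif_pos rfl, if_neg hr]
    rw [Finset.sum_congr rfl fun r _ => hterm r]
    -- reindex via the splitting equivalence
    rw [Fintype.sum_equiv (splitEquiv i0 (n := n))
      (fun r => if r i0 = j then (∏ l : G, sgn (σ l (r l.val))) * A j (fun l => r l.val) else 0)
      (fun p => if p.1 = j then (∏ l : G, sgn (σ l (p.2 l))) * A j p.2 else 0)
      (fun r => rfl)]
    rw [Fintype.sum_prod_type]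
    have hinner : ∀ j' : Fin n,
        (∑ g : G → Fin n, if j' = j then (∏ l : G, sgn (σ l (g l))) * A j g else 0)
          = if j' = j then (∑ g : G → Fin n, (∏ l : G, sgn (σ l (g l))) * A j g) else 0 := by
      intro j'
      by_cases hj : j' = j
      · simp [hj]
      · simp [hj]
    rw [Finset.sum_congr rfl fun j' _ => hinner j']
    rw [Finset.sum_ite_eq' Finset.univ j
      (fun _ => ∑ g : G → Fin n, (∏ l : G, sgn (σ l (g l))) * A j g)]
    simp
  -- step C : for each sign configuration, the row sums are bounded by M
  have stepC : ∀ σ : G → Fin n → Bool, ∑ j : Fin n, |T (X σ j)| ≤ M := by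
    intro σ
    set sg : Fin n → ℝ := fun j => if T (X σ j) < 0 then -1 else 1 with hsg
    have hs : ∀ j, sg j * T (X σ j) = |T (X σ j)| := by
      intro j
      by_cases h : T (X σ j) < 0
      · rw [hsg]; simp only [if_pos h]; rw [abs_of_neg h]; ring
      · rw [hsg]; simp only [if_neg h]; rw [abs_of_nonneg (not_lt.mp h)]; ring
    set Z : Fin m → Fin n → ℝ := fun l =>
      if h : l = i0 then (fun k => sg k) else (fun k => sgn (σ ⟨l,h⟩ k)) with hZ
    have hXupd : ∀ j, X σ j = Function.update Z i0 (Pi.single j (1:ℝ)) := by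
      intro j
      funext l
      by_cases h : l = i0
      · subst h
        rw [Function.update_self]
        simp only [hX, dif_pos rfl]
      · rw [Function.update_of_ne h]
        simp only [hX, hZ, dif_neg h]
    have hZi0 : Z i0 = ∑ j : Fin n, sg j • (Pi.single j 1 : Fin n → ℝ) := by
      funext k
      rw [Finset.sum_apply]
      have : ∀ j : Fin n, (sg j • (Pi.single j 1 : Fin n → ℝ)) k = if k = j then sg j else 0 := by
        intro j
        rw [Pi.smul_apply, Pi.single_apply]
        by_cases hk : k = j <;> simp [hk]
      rw [Finset.sum_congr rfl fun j _ => this j,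
        Finset.sum_ite_eq Finset.univ k (fun j => sg j)]
      simp [hZ]
    have hTZ : T Z = ∑ j : Fin n, |T (X σ j)| := by
      have hZupd : Z = Function.update Z i0 (∑ j : Fin n, sg j • (Pi.single j 1 : Fin n → ℝ)) := by
        rw [← hZi0, Function.update_eq_self]
      conv_lhs => rw [hZupd]
      rw [MultilinearMap.map_update_sum]
      refine Finset.sum_congr rfl fun j _ => ?_
      rw [MultilinearMap.map_update_smul, ← hXupd j, smul_eq_mul, hs j]
    have hZbound : ∀ l k, |Z l k| ≤ 1 := by
      intro l k
      by_cases h : l = i0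
      · subst h
        simp only [hZ, dif_pos rfl]
        rw [hsg]
        by_cases h2 : T (X σ k) < 0 <;> simp [h2]
      · simp only [hZ, dif_neg h]
        rw [abs_sgn]
    calc ∑ j : Fin n, |T (X σ j)| = T Z := hTZ.symm
      _ ≤ |T Z| := le_abs_self _
      _ ≤ M := hT Z hZbound
  -- assemble everything
  set K : ℝ := ((2:ℝ)^n)^(m-1) with hK
  have hKpos : (0:ℝ) < K := by positivity
  have perj : ∀ j : Fin n,
      Real.sqrt (∑ g : G → Fin n, (A j g)^2) * K
        ≤ (Real.sqrt 2)^(m-1) * ∑ σ : G → Fin n → Bool, |T (X σ j)| := by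
    intro j
    have key := multi_khinchin_general n (m-1) e (A j)
    rw [Finset.sum_congr rfl fun σ _ => congrArg abs (hexpT σ j)] at key
    exact key
  have total : (∑ j : Fin n, Real.sqrt (∑ g : G → Fin n, (A j g)^2)) * K
      ≤ (Real.sqrt 2)^(m-1) * (K * M) := by
    have h1 : (∑ j : Fin n, Real.sqrt (∑ g : G → Fin n, (A j g)^2)) * K
        = ∑ j : Fin n, Real.sqrt (∑ g : G → Fin n, (A j g)^2) * K := by
      rw [Finset.sum_mul]
    have h2 : ∑ j : Fin n, (Real.sqrt 2)^(m-1) * ∑ σ : G → Fin n → Bool, |T (X σ j)|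
        = (Real.sqrt 2)^(m-1) * ∑ σ : G → Fin n → Bool, ∑ j : Fin n, |T (X σ j)| := by
      rw [← Finset.mul_sum, Finset.sum_comm]
    have h3 : ∑ σ : G → Fin n → Bool, ∑ j : Fin n, |T (X σ j)|
        ≤ ∑ σ : G → Fin n → Bool, M := Finset.sum_le_sum fun σ _ => stepC σ
    have h4 : ∑ σ : 
        G → Fin n → Bool, (M:ℝ) = K * M := by
      rw [Finset.sum_const, Finset.card_univ, Fintype.card_fun, Fintype.card_fun,
        Fintype.card_bool, Fintype.card_fin, cardG, nsmul_eq_mul, hK]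
      push_cast
      ring
    calc (∑ j : Fin n, Real.sqrt (∑ g : G → Fin n, (A j g)^2)) * K
        = ∑ j : Fin n, Real.sqrt (∑ g : G → Fin n, (A j g)^2) * K := h1
      _ ≤ ∑ j : Fin n, (Real.sqrt 2)^(m-1) * ∑ σ : G → Fin n → Bool, |T (X σ j)| :=
          Finset.sum_le_sum fun j _ => perj j
      _ = (Real.sqrt 2)^(m-1) * ∑ σ : G → Fin n → Bool, ∑ j : Fin n, |T (X σ j)| := h2
      _ ≤ (Real.sqrt 2)^(m-1) * ∑ σ : G → Fin n → Bool, (M:ℝ) :=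
          mul_le_mul_of_nonneg_left h3 (by positivity)
      _ = (Real.sqrt 2)^(m-1) * (K * M) := by rw [h4]
  have final : ∑ j : Fin n, Real.sqrt (∑ g : G → Fin n, (A j g)^2)
      ≤ (Real.sqrt 2)^(m-1) * M := by
    have total' : (∑ j : Fin n, Real.sqrt (∑ g : G → Fin n, (A j g)^2)) * K
        ≤ ((Real.sqrt 2)^(m-1) * M) * K := by
      calc (∑ j : Fin n, Real.sqrt (∑ g : G → Fin n, (A j g)^2)) * K
          ≤ (Real.sqrt 2)^(m-1) * (K * M) := total
        _ = ((Real.sqrt 2)^(m-1) * M) * K := by ring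
    exact le_of_mul_le_mul_right total' hKpos
  have hexpo : Real.sqrt 2 ^ ((m : ℝ) - 1) = (Real.sqrt 2)^(m-1) := by
    have : ((m : ℝ) - 1) = ((m - 1 : ℕ) : ℝ) := by
      rw [Nat.cast_sub (by omega)]
      norm_num
    rw [this, Real.rpow_natCast]
  rw [hexpo]
  refine le_trans (le_of_eq ?_) final
  refine Finset.sum_congr rfl fun j _ => ?_
  rw [← Real.sqrt_eq_rpow]


/-- The constant associated to the multiple exponent (1,2,…,2) is at most
(√2)^{m-1} for real scalars: for every m-linear form T on (ℓ_∞^n)^m bounded by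
M on the unit ball,
Σ_{j₁} (Σ_{j₂,…,j_m} |T(e_{j₁},…,e_{j_m})|²)^{1/2} ≤ (√2)^{m-1} M. -/
theorem exponent_one_two_bound_real
    (m n : ℕ) (hm : 2 ≤ m) (hn : 1 ≤ n)
    (T : MultilinearMap ℝ (fun _ : Fin m => (Fin n → ℝ)) ℝ) (M : ℝ)
    (hT : ∀ x : Fin m → (Fin n → ℝ),
      (∀ i j, |x i j| ≤ 1) → |T x| ≤ M) :
    ∑ j1 : Fin n,
        (∑ g : {l : Fin m // l ≠ (⟨0, by omega⟩ : Fin m)} → Fin n,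
            (T fun l => Pi.single (comb ⟨0, by omega⟩ j1 g l) (1 : ℝ)) ^ 2) ^
          ((1 : ℝ) / 2) ≤
      Real.sqrt 2 ^ ((m : ℝ) - 1) * M := by
  exact main_aux m n hm hn ⟨0, by omega⟩ T M hT
end

section
/- (Induction step, diagonal case.) Suppose that for some 1 ≤ k ≤ m the mixed-norm inequality (Σ_{j_i} (Σ_{ĵ_i} |T(e_{j₁},…,e_{j_m})|^s)^{λ_{k−1}/s})^{1/λ_{k−1}} ≤ C ‖T‖ holds for all i and all m-linear forms T on (ℓ_p^n)^{k−1} × (ℓ_∞^n)^{m−k+1}. Then for every m-linear form T on (ℓ_p^n)^k × (ℓ_∞^n)^{m−k}, (Σ_{j_k} (Σ_{ĵ_k} |T(e_{j₁},…,e_{j_m})|^s)^{λ_k/s})^{1/λ_k} ≤ C ‖T‖. -/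
set_option maxHeartbeats 1000000 in
/-- Induction step, diagonal case: if for some 1 ≤ k ≤ m the mixed-norm
inequality with exponent λ_{k-1} holds in every coordinate i for all m-linear
forms on (ℓ_p^n)^{k-1} × (ℓ_∞^n)^{m-k+1}, then for every m-linear form on
(ℓ_p^n)^k × (ℓ_∞^n)^{m-k} the mixed-norm inequality with exponent λ_k holds in
the k-th coordinate.  Here a form bounded by M on the product of the relevant
unit balls plays the role of C‖T‖ ≤ C·M. -/
theorem hardy_littlewood_induction_diagonal
    (m n k : ℕ) (hm : 2 ≤ m) (hk1 : 1 ≤ k) (hkm : k ≤ m) (hn : 1 ≤ n)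
    (p : ℝ) (hp : 2 * m ≤ p)
    (s lam0 : ℝ)
    (hs : s = 2 * m * p / (m * p + p - 2 * m))
    (hlam0 : lam0 = 2 * s / (m * s + s - 2 * m + 2))
    (lam : ℕ → ℝ) (hlam : ∀ j : ℕ, lam j = lam0 * p / (p - lam0 * j))
    (C : ℝ) (hC : 1 ≤ C)
    (hind : ∀ (T : MultilinearMap ℝ (fun _ : Fin m => (Fin n → ℝ)) ℝ) (M : ℝ),
      (∀ x : Fin m → (Fin n → ℝ),
        (∀ i : Fin m, ((i : ℕ) < k - 1 → ∑ j, |x i j| ^ p ≤ 1) ∧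
          (k - 1 ≤ (i : ℕ) → ∀ j, |x i j| ≤ 1)) → |T x| ≤ M) →
      ∀ i : Fin m,
        (∑ ji : Fin n,
            (∑ g : {l : Fin m // l ≠ i} → Fin n,
                |T fun l => Pi.single (comb i ji g l) (1 : ℝ)| ^ s) ^
              (lam (k - 1) / s)) ^ (1 / lam (k - 1)) ≤ C * M)
    (T : MultilinearMap ℝ (fun _ : Fin m => (Fin n → ℝ)) ℝ) (M : ℝ)
    (hT : ∀ x : Fin m → (Fin n → ℝ),
      (∀ i : Fin m, ((i : ℕ) < k → ∑ j, |x i j| ^ p ≤ 1) ∧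
        (k ≤ (i : ℕ) → ∀ j, |x i j| ≤ 1)) → |T x| ≤ M) :
    (∑ jk : Fin n,
        (∑ g : {l : Fin m // l ≠ (⟨k - 1, by omega⟩ : Fin m)} → Fin n,
            |T fun l => Pi.single (comb ⟨k - 1, by omega⟩ jk g l) (1 : ℝ)| ^ s) ^
          (lam k / s)) ^ (1 / lam k) ≤ C * M := by
  -- basic positivity
  have hmR : (2:ℝ) ≤ (m:ℝ) := by exact_mod_cast hm
  have hp0 : (0:ℝ) < p := by nlinarith
  have hD : (0:ℝ) < m * p + p - 2 * m := by nlinarith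
  have hs0 : 0 < s := by rw [hs]; exact div_pos (by nlinarith) hD
  have hN : (0:ℝ) < 2*(m+1)*p + 4*m^2 - 4*m := by nlinarith
  have hEval : m * s + s - 2*m + 2 = (2*(m+1)*p + 4*m^2 - 4*m) / (m*p + p - 2*m) := by
    have key : 2 * (m:ℝ) * p / (m * p + p - 2 * m) * (m * p + p - 2 * m) = 2 * m * p :=
      div_mul_cancel₀ _ hD.ne'
    rw [hs, eq_div_iff hD.ne']; linear_combination ((m:ℝ) + 1) * key
  have hE : (0:ℝ) < m * s + s - 2*m + 2 := by rw [hEval]; exact div_pos hN hD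
  have hlam0val : lam0 = 4*m*p / (2*(m+1)*p + 4*m^2 - 4*m) := by
    have hD' : ((m:ℝ) * p + p - 2 * m) ≠ 0 := hD.ne'
    have hN' : (2*((m:ℝ)+1)*p + 4*(m:ℝ)^2 - 4*m) ≠ 0 := hN.ne'
    rw [hlam0, hEval, hs]
    rw [div_div_eq_mul_div, mul_assoc (2:ℝ) (2 * m * p / (m * p + p - 2 * m)), div_mul_cancel₀ _ hD']
    ring
  have hlam0pos : 0 < lam0 := by rw [hlam0val]; exact div_pos (by nlinarith) hN
  have hlam0lt : lam0 < 2 := by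
    rw [hlam0val, div_lt_iff₀ hN]; nlinarith
  have hdenom : ∀ j : ℕ, (j:ℝ) ≤ (m:ℝ) → 0 < p - lam0 * j := by
    intro j hj
    have h1 : lam0 * j ≤ lam0 * m := by
      apply mul_le_mul_of_nonneg_left hj hlam0pos.le
    nlinarith
  have hkR : ((k:ℕ):ℝ) ≤ (m:ℝ) := by exact_mod_cast hkm
  have hdk : 0 < p - lam0 * k := hdenom k hkR
  have hcast : ((k-1 : ℕ) : ℝ) = (k:ℝ) - 1 := by
    have : ((k-1 : ℕ) : ℝ) = ((k:ℕ):ℝ) - 1 := by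
      rw [Nat.cast_sub hk1]; norm_num
    simpa using this
  have hdk1 : 0 < p - lam0 * ((k:ℝ) - 1) := by
    have := hdenom (k-1) (by rw [hcast]; linarith)
    rwa [hcast] at this
  have hlamk : lam k = lam0 * p / (p - lam0 * k) := hlam k
  have hlamk1 : lam (k-1) = lam0 * p / (p - lam0 * ((k:ℝ) - 1)) := by
    rw [hlam (k-1), hcast]
  have hlamkpos : 0 < lam k := by rw [hlamk]; exact div_pos (by positivity) hdk
  have hlamk1pos : 0 < lam (k-1) := by rw [hlamk1]; exact div_pos (by positivity) hdk1
  -- key identity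
  have hkey : lam (k-1) * lam k = p * (lam k - lam (k-1)) := by
    rw [hlamk, hlamk1]
    field_simp
    ring
  -- exponent identities
  have hexp1 : lam k / s * (lam (k-1) / p) + lam (k-1) / s = lam k / s := by
    field_simp
    linear_combination hkey
  have hexp2 : (1 - lam (k-1) / p) * (1 / lam (k-1)) = 1 / lam k := by
    field_simp
    linear_combination -hkey
  -- setup
  set i0 : Fin m := ⟨k-1, by omega⟩ with hi0def
  have hi0val : (i0 : ℕ) = k - 1 := rfl
  -- M is nonnegative
  have hM0 : 0 ≤ M := by
    have h0 := hT (fun _ _ => 0) ?_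
    · have hT0 : T (fun _ _ => (0:ℝ)) = 0 := T.map_coord_zero ⟨0, by omega⟩ rfl
      rwa [hT0, abs_zero] at h0
    · intro i
      refine ⟨fun _ => ?_, fun _ j => by simp⟩
      simp [Real.zero_rpow hp0.ne']
  set B : Fin n → ℝ := fun jk => ∑ g : {l : Fin m // l ≠ i0} → Fin n,
      |T fun l => Pi.single (comb i0 jk g l) (1:ℝ)| ^ s with hBdef
  have hB0 : ∀ jk, 0 ≤ B jk := fun jk =>
    Finset.sum_nonneg fun g _ => Real.rpow_nonneg (abs_nonneg _) _
  set S : ℝ := ∑ jk : Fin n, (B jk) ^ (lam k / s) with hSdef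
  have hS0 : 0 ≤ S := Finset.sum_nonneg fun jk _ => Real.rpow_nonneg (hB0 jk) _
  show S ^ (1 / lam k) ≤ C * M
  rcases hS0.eq_or_lt with hSz | hSpos
  · rw [← hSz, Real.zero_rpow (one_div_ne_zero hlamkpos.ne')]
    exact mul_nonneg (by linarith) hM0
  -- extremal vector
  set x : Fin n → ℝ := fun j => ((B j) ^ (lam k / s) / S) ^ (1/p) with hxdef
  have hx0 : ∀ j, 0 ≤ x j := fun j => Real.rpow_nonneg (div_nonneg (Real.rpow_nonneg (hB0 j) _) hS0) _
  have hxp : ∀ j, (x j) ^ p = (B j) ^ (lam k / s) / S := by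
    intro j
    show (((B j) ^ (lam k / s) / S) ^ (1/p)) ^ p = _
    rw [← Real.rpow_mul (div_nonneg (Real.rpow_nonneg (hB0 j) _) hS0), one_div,
      inv_mul_cancel₀ hp0.ne', Real.rpow_one]
  have hxsum : ∑ j, (x j) ^ p = 1 := by
    simp_rw [hxp]
    rw [← Finset.sum_div, ← hSdef, div_self hSpos.ne']
  -- scaled multilinear map
  set scl : (Fin n → ℝ) →ₗ[ℝ] (Fin n → ℝ) := LinearMap.pi (fun j => x j • LinearMap.proj j)
    with hscldef
  have hscl : ∀ z j, scl z j = x j * z j := fun z j => rfl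
  set T' : MultilinearMap ℝ (fun _ : Fin m => (Fin n → ℝ)) ℝ :=
    T.compLinearMap (fun l => if l = i0 then scl else LinearMap.id) with hT'def
  -- boundedness of T'
  have hT'bound : ∀ y : Fin m → (Fin n → ℝ),
      (∀ i : Fin m, ((i:ℕ) < k - 1 → ∑ j, |y i j| ^ p ≤ 1) ∧
        (k - 1 ≤ (i:ℕ) → ∀ j, |y i j| ≤ 1)) → |T' y| ≤ M := by
    intro y hy
    have heq : T' y = T (fun l => if l = i0 then (fun j => x j * y l j) else y l) := by
      rw [hT'def, MultilinearMap.compLinearMap_apply]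
      congr 1
      funext l
      by_cases h : l = i0
      · subst h; simp only [if_pos rfl]; funext j; exact hscl _ j
      · simp only [if_neg h]; rfl
    rw [heq]
    apply hT
    intro i
    constructor
    · intro hik
      by_cases h : i = i0
      · subst h
        simp only [if_pos rfl]
        calc ∑ j, |x j * y i0 j| ^ p ≤ ∑ j, (x j) ^ p := by
              apply Finset.sum_le_sum
              intro j _
              have h1 : |y i0 j| ≤ 1 := (hy i0).2 (le_of_eq hi0val.symm) j
              have h2 : |x j * y i0 j| ≤ x j := by
                rw [abs_mul, abs_of_nonneg (hx0 j)]
                nlinarith [abs_nonneg (y i0 j), hx0 j]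
              exact Real.rpow_le_rpow (abs_nonneg _) h2 hp0.le
          _ = 1 := hxsum
      · simp only [if_neg h]
        apply (hy i).1
        have : (i:ℕ) ≠ k - 1 := fun hc => h (Fin.ext (by rw [hc, hi0val]))
        omega
    · intro hik j
      have h : i ≠ i0 := by
        intro hc
        rw [hc, hi0val] at hik
        omega
      simp only [if_neg h]
      exact (hy i).2 (by omega) j
  have hmain := hind T' M hT'bound i0
  -- T' on basis vectors
  have hT'e : ∀ (ji : Fin n) (g : {l : Fin m // l ≠ i0} → Fin n),
      T' (fun l => Pi.single (comb i0 ji g l) (1:ℝ)) =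
      x ji * T (fun l => Pi.single (comb i0 ji g l) (1:ℝ)) := by
    intro ji g
    have hbase : comb i0 ji g i0 = ji := by simp [comb]
    set e : Fin m → Fin n → ℝ := fun l => Pi.single (comb i0 ji g l) (1:ℝ) with hedef
    have h1 : (fun l => (if l = i0 then scl else LinearMap.id) (e l))
        = Function.update e i0 (x ji • (Pi.single ji (1:ℝ) : Fin n → ℝ)) := by
      funext l
      by_cases h : l = i0
      · subst h
        rw [Function.update_self, if_pos rfl]
        funext j
        rw [hscl]
        show x j * (Pi.single (comb i0 ji g i0) (1:ℝ) : Fin n → ℝ) j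
          = (x ji • (Pi.single ji (1:ℝ) : Fin n → ℝ)) j
        rw [hbase]
        by_cases hj : j = ji
        · subst hj; simp [Pi.single_apply]
        · simp [Pi.single_apply, hj]
      · rw [Function.update_of_ne h, if_neg h]; rfl
    have h2 : Function.update e i0 ((Pi.single ji (1:ℝ) : Fin n → ℝ)) = e := by
      funext l
      by_cases h : l = i0
      · subst h
        rw [Function.update_self]
        show (Pi.single ji (1:ℝ) : Fin n → ℝ) = (Pi.single (comb i0 ji g i0) (1:ℝ) : Fin n → ℝ)
        rw [hbase]
      · rw [Function.update_of_ne h]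
    calc T' e
        = T (Function.update e i0 (x ji • (Pi.single ji (1:ℝ) : Fin n → ℝ))) := by
          rw [hT'def, MultilinearMap.compLinearMap_apply, h1]
      _ = x ji • T (Function.update e i0 ((Pi.single ji (1:ℝ) : Fin n → ℝ))) :=
          T.map_update_smul _ i0 _ _
      _ = x ji * T e := by rw [h2, smul_eq_mul]
  -- inner sums for T'
  have hinner : ∀ ji : Fin n,
      (∑ g : {l : Fin m // l ≠ i0} → Fin n,
        |T' fun l => Pi.single (comb i0 ji g l) (1:ℝ)| ^ s) = (x ji) ^ s * B ji := by
    intro ji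
    rw [show B ji = ∑ g : {l : Fin m // l ≠ i0} → Fin n,
      |T fun l => Pi.single (comb i0 ji g l) (1:ℝ)| ^ s from rfl, Finset.mul_sum]
    apply Finset.sum_congr rfl
    intro g _
    rw [hT'e ji g, abs_mul, abs_of_nonneg (hx0 ji),
      Real.mul_rpow (hx0 ji) (abs_nonneg _)]
  -- each outer term
  have hterm : ∀ ji : Fin n,
      ((x ji) ^ s * B ji) ^ (lam (k-1) / s)
        = (B ji) ^ (lam k / s) / S ^ (lam (k-1) / p) := by
    intro ji
    rw [Real.mul_rpow (Real.rpow_nonneg (hx0 ji) s) (hB0 ji),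
      ← Real.rpow_mul (hx0 ji),
      show s * (lam (k-1)/s) = lam (k-1) by field_simp]
    have hxa : (x ji) ^ lam (k-1)
        = (B ji) ^ (lam k / s * (lam (k-1) / p)) / S ^ (lam (k-1) / p) := by
      show (((B ji) ^ (lam k / s) / S) ^ (1/p)) ^ lam (k-1) = _
      rw [← Real.rpow_mul (div_nonneg (Real.rpow_nonneg (hB0 ji) _) hS0),
        show 1/p * lam (k-1) = lam (k-1)/p by ring,
        Real.div_rpow (Real.rpow_nonneg (hB0 ji) _) hS0,
        ← Real.rpow_mul (hB0 ji)]
    rw [hxa, div_mul_eq_mul_div,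
      ← Real.rpow_add' (hB0 ji) (by rw [hexp1]; exact (div_pos hlamkpos hs0).ne'),
      hexp1]
  -- sum identity
  have houter :
      (∑ ji : Fin n, (∑ g : {l : Fin m // l ≠ i0} → Fin n,
        |T' fun l => Pi.single (comb i0 ji g l) (1:ℝ)| ^ s) ^ (lam (k-1) / s))
      = S ^ (1 - lam (k-1) / p) := by
    calc (∑ ji : Fin n, (∑ g : {l : Fin m // l ≠ i0} → Fin n,
          |T' fun l => Pi.single (comb i0 ji g l) (1:ℝ)| ^ s) ^ (lam (k-1) / s))
        = ∑ ji : Fin n, (B ji) ^ (lam k / s) / S ^ (lam (k-1) / p) := by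
          refine Finset.sum_congr rfl fun ji _ => ?_
          rw [hinner ji, hterm ji]
      _ = S / S ^ (lam (k-1) / p) := by rw [← Finset.sum_div, ← hSdef]
      _ = S ^ (1 - lam (k-1) / p) := by
          rw [Real.rpow_sub hSpos, Real.rpow_one]
  rw [houter] at hmain
  calc S ^ (1 / lam k) = (S ^ (1 - lam (k-1) / p)) ^ (1 / lam (k-1)) := by
        rw [← Real.rpow_mul hS0, hexp2]
    _ ≤ C * M := hmain
end
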